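/- Fix an integer N ≥ 3, parameters λ_1, λ_2, … in [0,1], and let ρ_1 = p_1|ψ⟩⟨ψ| + p_2|0…0⟩⟨0…0| + p_3|1…1⟩⟨1…1| with |ψ⟩ = √α|0…0⟩ + √(1−α)|1…1⟩, α ∈ (0,1), p_1 > 0, p_2, p_3 ≥ 0, p_1+p_2+p_3 = 1, and ρ_k = (id ⊗ Φ_{λ_{k−1}})(ρ_{k−1}) for k ≥ 2 (the map acting on the N-th qubit). Then for every k ≥ 1, Tr(W^{λ_k} ρ_k) = 1 − ∏_{j=1}^{k−1} (1+√(1−λ_j²))/2 − 2p_1√(α(1−α))·λ_k/2^{k−1}; hence Tr(W^{λ_k} ρ_k) < 0 if and only if λ_k > (2^{k−1}/(2p_1√(α(1−α))))·[1 − ∏_{j=1}^{k−1} (1+√(1−λ_j²))/2]. -/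

import Mathlib

open Matrix
open scoped ComplexOrder

noncomputable section

/-- The space of operators on `N` qubits: complex `2^N × 2^N` matrices, with the
`N`-fold tensor-product structure made explicit by indexing rows and columns by
functions `Fin N → Fin 2`. -/
abbrev QM (N : ℕ) := Matrix (Fin N → Fin 2) (Fin N → Fin 2) ℂ

/-- The Pauli matrix σ_x. -/
def sigx : Matrix (Fin 2) (Fin 2) ℂ := !![0, 1; 1, 0]

/-- The Pauli matrix σ_z. -/
def sigz : Matrix (Fin 2) (Fin 2) ℂ := !![1, 0; 0, -1]

/-- The tensor (Kronecker) product `f 0 ⊗ f 1 ⊗ ⋯ ⊗ f (N-1)` of single-qubit operators. -/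
def tensorAll (N : ℕ) (f : Fin N → Matrix (Fin 2) (Fin 2) ℂ) : QM N :=
  Matrix.of fun v w => ∏ i, f i (v i) (w i)

/-- The single-qubit operator `M` acting on qubit `m`, tensored with the identity
on all other qubits. -/
def site (N : ℕ) (m : Fin N) (M : Matrix (Fin 2) (Fin 2) ℂ) : QM N :=
  tensorAll N (fun i => if i = m then M else 1)

/-- GHZ stabilizer generator `S_1 = σ_x^(1) σ_x^(2) ⋯ σ_x^(N)`. -/
def ghzS1 (N : ℕ) : QM N := tensorAll N (fun _ => sigx)

/-- GHZ stabilizer generator with σ_z on qubits `m-1` and `m` (0-based `m : Fin N`,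
`m ≠ 0`); it represents the 1-based generator `S_{m+1} = σ_z^{(m)} σ_z^{(m+1)}`. -/
def ghzSz (N : ℕ) (m : Fin N) : QM N :=
  tensorAll N (fun i => if i.val = m.val - 1 ∨ i = m then sigz else 1)

/-- The product `∏_{m=2}^{N} (I + S_m)/2` appearing in the GHZ witness
(the factors pairwise commute, so the list ordering is immaterial). -/
def ghzProd (N : ℕ) : QM N :=
  (((List.finRange N).filter (fun m => m.val ≠ 0)).map
    (fun m => (1/2 : ℂ) • ((1 : QM N) + ghzSz N m))).prod

/-- The GHZ genuine-multipartite-entanglement witness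
`W = 3 I − 2 [ (I + S_1)/2 + ∏_{m=2}^N (I + S_m)/2 ]`. -/
def ghzWitness (N : ℕ) : QM N :=
  (3 : ℂ) • (1 : QM N) -
    (2 : ℂ) • ((1/2 : ℂ) • ((1 : QM N) + ghzS1 N) + ghzProd N)

/-- The modified (unsharp) GHZ witness
`W^λ = 3 I − 2 [ (I + λ S_1)/2 + ∏_{m=2}^N (I + S_m)/2 ]`. -/
def ghzWitnessMod (N : ℕ) (lam : ℝ) : QM N :=
  (3 : ℂ) • (1 : QM N) -
    (2 : ℂ) • ((1/2 : ℂ) • ((1 : QM N) + (lam : ℂ) • ghzS1 N) + ghzProd N)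

/-- The rank-one projector `|ψ⟩⟨ψ|` onto a vector `ψ`. -/
def outer (N : ℕ) (ψ : (Fin N → Fin 2) → ℂ) : QM N :=
  Matrix.vecMulVec ψ (star ψ)

/-- The computational basis vector `|0…0⟩ = |0⟩^{⊗N}`. -/
def allZero (N : ℕ) : (Fin N → Fin 2) → ℂ := fun v => if ∀ i, v i = 0 then 1 else 0

/-- The computational basis vector `|1…1⟩ = |1⟩^{⊗N}`. -/
def allOne (N : ℕ) : (Fin N → Fin 2) → ℂ := fun v => if ∀ i, v i = 1 then 1 else 0

/-- The generalized GHZ state vector `|ψ⟩ = √α |0…0⟩ + √(1−α) |1…1⟩`. -/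
def genGhzVec (N : ℕ) (α : ℝ) : (Fin N → Fin 2) → ℂ := fun v =>
  if ∀ i, v i = 0 then ((Real.sqrt α : ℝ) : ℂ)
  else if ∀ i, v i = 1 then ((Real.sqrt (1 - α) : ℝ) : ℂ) else 0

/-- The mixed state `ρ₁ = p₁|ψ⟩⟨ψ| + p₂|0…0⟩⟨0…0| + p₃|1…1⟩⟨1…1|`. -/
def mixedState (N : ℕ) (α p₁ p₂ p₃ : ℝ) : QM N :=
  (p₁ : ℂ) • outer N (genGhzVec N α) + (p₂ : ℂ) • outer N (allZero N)
    + (p₃ : ℂ) • outer N (allOne N)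

/-- The single-qubit unsharp-measurement channel
`Φ_λ(ρ) = ((2+√(1−λ²))/4)ρ + (1/4)σ_z ρ σ_z + ((1−√(1−λ²))/4)σ_x ρ σ_x`, applied to
qubit `m` of an `N`-qubit operator (and acting as the identity on the other qubits). -/
def phiMap (N : ℕ) (m : Fin N) (lam : ℝ) (ρ : QM N) : QM N :=
  (((2 + Real.sqrt (1 - lam ^ 2)) / 4 : ℝ) : ℂ) • ρ
    + (1/4 : ℂ) • (site N m sigz * ρ * site N m sigz)
    + (((1 - Real.sqrt (1 - lam ^ 2)) / 4 : ℝ) : ℂ) • (site N m sigx * ρ * site N m sigx)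

/-!
Work in the Heisenberg picture: `Φ_λ` is self-dual for the trace pairing, so
`Tr(O ρ_{k+1}) = Tr(Φ_{λ_k}(O) ρ_k)`. Let `X = σ_x^{(N)}`, `Z = σ_z^{(N)}` and let `P` be the
projector `∏_{m≥2} (I + S_m)/2` onto `span{|0…0⟩, |1…1⟩}`. Conjugation by `Z` and `X` multiplies
`S_1` by `-1` and `1`, the identity and `P + XPX` by `1` and `1`, and `P - XPX` by `1` and `-1`,
so these are eigen-observables of `Φ_λ` with eigenvalues `1/2`, `1`, `1` and
`(1 + √(1-λ²))/2`. Since `W^λ = 2I - λ S_1 - (P + XPX) - (P - XPX)`, the trace against `ρ_k` is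
a product of eigenvalues times the trace against `ρ_1`, which only involves the entries of the
observables at `|0…0⟩` and `|1…1⟩`.
-/

section

variable {N : ℕ}

lemma fin_two_pi_add_self {ι : Type*} (a : ι → Fin 2) : a + a = 0 := by
  funext i
  have : ∀ b : Fin 2, b + b = 0 := by decide
  exact this (a i)

lemma fin_two_pi_add_add_self {ι : Type*} (v a : ι → Fin 2) : v + a + a = v := by
  rw [add_assoc, fin_two_pi_add_self, add_zero]

lemma fin_two_pi_zero_ne_one (hN : 0 < N) : (0 : Fin N → Fin 2) ≠ 1 :=
  fun h => zero_ne_one (congrFun h ⟨0, hN⟩)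

def shiftMatrix {G : Type*} [Add G] [DecidableEq G] (a : G) : Matrix G G ℂ :=
  of fun v w => if w = v + a then 1 else 0

lemma shiftMatrix_zero : shiftMatrix (0 : Fin 2) = 1 := by
  ext b c
  simp [shiftMatrix, one_apply, eq_comm]

lemma shiftMatrix_mul_apply (a : Fin N → Fin 2) (A : QM N) (v w : Fin N → Fin 2) :
    (shiftMatrix a * A) v w = A (v + a) w := by
  simp [shiftMatrix, mul_apply]

lemma mul_shiftMatrix_apply (a : Fin N → Fin 2) (A : QM N) (v w : Fin N → Fin 2) :
    (A * shiftMatrix a) v w = A v (w + a) := by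
  have (u : Fin N → Fin 2) : w = u + a ↔ u = w + a := by
    constructor <;> rintro rfl <;> rw [fin_two_pi_add_add_self]
  simp [shiftMatrix, mul_apply, this]

lemma list_prod_map_boole {β M : Type*} [MonoidWithZero M] (l : List β) (p : β → Prop)
    [DecidablePred p] :
    (l.map fun b => if p b then (1 : M) else 0).prod = if ∀ b ∈ l, p b then 1 else 0 := by
  induction l with
  | nil => simp
  | cons a l ih =>
    simp only [List.map_cons, List.prod_cons, ih, List.forall_mem_cons, ite_zero_mul_ite_zero,
      mul_one]

lemma list_prod_map_diagonal {β n α : Type*} [Fintype n] [DecidableEq n] [Semiring α]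
    (l : List β) (d : β → n → α) :
    (l.map fun b => diagonal (d b)).prod = diagonal fun v => (l.map fun b => d b v).prod := by
  induction l with
  | nil => simp
  | cons a l ih => simp only [List.map_cons, List.prod_cons, ih, diagonal_mul_diagonal]

lemma tensorAll_diagonal (d : Fin N → Fin 2 → ℂ) :
    tensorAll N (fun i => diagonal (d i)) = diagonal (fun v => ∏ i, d i (v i)) := by
  ext v w
  by_cases h : v = w
  · subst h
    simp [tensorAll]
  · obtain ⟨j, hj⟩ := Function.ne_iff.mp h
    rw [diagonal_apply_ne _ h]
    exact Finset.prod_eq_zero (Finset.mem_univ j) (diagonal_apply_ne _ hj)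

lemma tensorAll_shiftMatrix (a : Fin N → Fin 2) :
    tensorAll N (fun i => shiftMatrix (a i)) = shiftMatrix a := by
  ext v w
  simp [tensorAll, shiftMatrix, Finset.prod_boole, funext_iff]

lemma sigz_eq_diagonal : sigz = diagonal ![1, -1] := by
  ext a b
  fin_cases a <;> fin_cases b <;> simp [sigz]

lemma sigx_eq_shiftMatrix : sigx = shiftMatrix 1 := by
  ext a b
  fin_cases a <;> fin_cases b <;> simp [sigx, shiftMatrix]

lemma sigz_diag_mul_self (b : Fin 2) : ![(1 : ℂ), -1] b * ![1, -1] b = 1 := by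
  fin_cases b <;> simp

lemma sigz_diag_mul_add_one (b : Fin 2) : ![(1 : ℂ), -1] b * ![1, -1] (b + 1) = -1 := by
  fin_cases b <;> simp

lemma half_mul_one_add_sigz_diag_mul (a b : Fin 2) :
    (1 / 2 : ℂ) * (1 + ![1, -1] a * ![1, -1] b) = if a = b then 1 else 0 := by
  fin_cases a <;> fin_cases b <;> norm_num

lemma site_sigz (m : Fin N) : site N m sigz = diagonal fun v => ![1, -1] (v m) := by
  have : (fun i => if i = m then sigz else 1)
      = fun i => diagonal (if i = m then ![1, -1] else 1) := by
    funext i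
    split_ifs <;> simp [sigz_eq_diagonal]
  rw [site, this, tensorAll_diagonal]
  congr 1
  funext v
  rw [Fintype.prod_eq_single m (fun i hi => by simp [hi])]
  simp

lemma site_sigx (m : Fin N) : site N m sigx = shiftMatrix (Pi.single m 1) := by
  rw [← tensorAll_shiftMatrix, site]
  congr 1
  funext i
  split_ifs with h <;> simp [h, sigx_eq_shiftMatrix, shiftMatrix_zero]

lemma ghzS1_eq_shiftMatrix : ghzS1 N = shiftMatrix 1 := by
  rw [ghzS1, sigx_eq_shiftMatrix, ← tensorAll_shiftMatrix]
  rfl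

lemma conj_site_sigz_apply (m : Fin N) (A : QM N) (v w : Fin N → Fin 2) :
    (site N m sigz * A * site N m sigz) v w = ![1, -1] (v m) * A v w * ![1, -1] (w m) := by
  rw [site_sigz, mul_diagonal, diagonal_mul]

lemma conj_site_sigx_apply (m : Fin N) (A : QM N) (v w : Fin N → Fin 2) :
    (site N m sigx * A * site N m sigx) v w = A (v + Pi.single m 1) (w + Pi.single m 1) := by
  rw [site_sigx, mul_shiftMatrix_apply, shiftMatrix_mul_apply]

lemma conj_site_sigz_diagonal (m : Fin N) (f : (Fin N → Fin 2) → ℂ) :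
    site N m sigz * diagonal f * site N m sigz = diagonal f := by
  rw [site_sigz, diagonal_mul_diagonal, diagonal_mul_diagonal]
  congr
  funext v
  rw [mul_right_comm, sigz_diag_mul_self, one_mul]

lemma conj_site_sigx_diagonal (m : Fin N) (f : (Fin N → Fin 2) → ℂ) :
    site N m sigx * diagonal f * site N m sigx = diagonal fun v => f (v + Pi.single m 1) := by
  ext v w
  by_cases h : v = w <;> simp [conj_site_sigx_apply, h]

lemma trace_mul_phiMap (m : Fin N) (lam : ℝ) (A ρ : QM N) :
    (A * phiMap N m lam ρ).trace = (phiMap N m lam A * ρ).trace := by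
  have (U : QM N) : (A * (U * ρ * U)).trace = (U * A * U * ρ).trace := by
    simp only [← Matrix.mul_assoc]
    rw [Matrix.trace_mul_comm]
    simp only [Matrix.mul_assoc]
  simp only [phiMap, Matrix.mul_add, Matrix.add_mul, Matrix.mul_smul, Matrix.smul_mul,
    trace_add, trace_smul, this]

lemma phiMap_eq_smul_of_conj (m : Fin N) (lam : ℝ) (A : QM N) (εz εx : ℂ)
    (hz : site N m sigz * A * site N m sigz = εz • A)
    (hx : site N m sigx * A * site N m sigx = εx • A) :
    phiMap N m lam A = ((((2 + √(1 - lam ^ 2)) / 4 : ℝ) : ℂ) + 1 / 4 * εz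
      + (((1 - √(1 - lam ^ 2)) / 4 : ℝ) : ℂ) * εx) • A := by
  rw [phiMap, hz, hx, smul_smul, smul_smul, add_smul, add_smul]

lemma phiMap_ghzS1 (m : Fin N) (lam : ℝ) :
    phiMap N m lam (ghzS1 N) = (1 / 2 : ℂ) • ghzS1 N := by
  rw [phiMap_eq_smul_of_conj m lam _ (-1) 1]
  · congr 1
    push_cast
    ring
  · ext v w
    rw [conj_site_sigz_apply, ghzS1_eq_shiftMatrix]
    by_cases h : w = v + 1
    · subst h
      simp [shiftMatrix, sigz_diag_mul_add_one]
    · simp [shiftMatrix, h]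
  · ext v w
    simp only [conj_site_sigx_apply, ghzS1_eq_shiftMatrix, shiftMatrix, of_apply, one_smul,
      add_right_comm v (Pi.single m 1), add_left_inj]

lemma phiMap_diagonal_of_flip_invariant (m : Fin N) (lam : ℝ) (f : (Fin N → Fin 2) → ℂ)
    (hf : ∀ v, f (v + Pi.single m 1) = f v) : phiMap N m lam (diagonal f) = diagonal f := by
  rw [phiMap_eq_smul_of_conj m lam _ 1 1 (by rw [conj_site_sigz_diagonal, one_smul])
    (by simp only [conj_site_sigx_diagonal, hf, one_smul])]
  convert one_smul ℂ (diagonal f)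
  push_cast
  ring

lemma phiMap_diagonal_of_flip_antiinvariant (m : Fin N) (lam : ℝ) (f : (Fin N → Fin 2) → ℂ)
    (hf : ∀ v, f (v + Pi.single m 1) = -f v) :
    phiMap N m lam (diagonal f) = (((1 + √(1 - lam ^ 2)) / 2 : ℝ) : ℂ) • diagonal f := by
  rw [phiMap_eq_smul_of_conj m lam _ 1 (-1) (by rw [conj_site_sigz_diagonal, one_smul])
    (by simp only [conj_site_sigx_diagonal, hf, neg_smul, one_smul, diagonal_neg])]
  congr 1
  push_cast
  ring

lemma phiMap_one (m : Fin N) (lam : ℝ) : phiMap N m lam 1 = 1 := by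
  rw [← diagonal_one]
  exact phiMap_diagonal_of_flip_invariant m lam _ fun _ => rfl

lemma trace_mul_eq_prod_of_phiMap_eq_smul (m : Fin N) (lam : ℕ → ℝ) (ρ : ℕ → QM N)
    (hrec : ∀ k, 1 ≤ k → ρ (k + 1) = phiMap N m (lam k) (ρ k)) (O : QM N) (c : ℕ → ℂ)
    (hO : ∀ j, phiMap N m (lam j) O = c j • O) (k : ℕ) (hk : 1 ≤ k) :
    (O * ρ k).trace = (∏ j ∈ Finset.Icc 1 (k - 1), c j) * (O * ρ 1).trace := by
  induction k, hk using Nat.le_induction with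
  | base => simp
  | succ k hk ih =>
    have hprod : ∏ j ∈ Finset.Icc 1 k, c j = (∏ j ∈ Finset.Icc 1 (k - 1), c j) * c k := by
      obtain ⟨k, rfl⟩ : ∃ j, k = j + 1 := ⟨k - 1, by omega⟩
      exact Finset.prod_Icc_succ_top (by omega) c
    rw [hrec k hk, trace_mul_phiMap, hO, smul_mul, trace_smul, ih, smul_eq_mul,
      Nat.add_sub_cancel, hprod]
    ring

lemma ghzSz_eq_diagonal (m : Fin N) (hm : m.val ≠ 0) :
    ghzSz N m = diagonal fun v => ![1, -1] (v ⟨m - 1, by omega⟩) * ![1, -1] (v m) := by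
  have : (fun i : Fin N => if i.val = m.val - 1 ∨ i = m then sigz else 1)
      = fun i => diagonal (if i.val = m.val - 1 ∨ i = m then ![1, -1] else 1) := by
    funext i
    split_ifs <;> simp [sigz_eq_diagonal]
  rw [ghzSz, this, tensorAll_diagonal]
  congr 1
  funext v
  refine Fintype.prod_eq_mul ⟨m - 1, by omega⟩ m (by simp [Fin.ext_iff]; omega)
    (fun i hi => ?_) |>.trans (by simp)
  rw [if_neg (by simp [Fin.ext_iff] at hi ⊢; omega)]
  rfl

lemma ghzSz_factor_eq_diagonal (m : Fin N) (hm : m.val ≠ 0) :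
    (1 / 2 : ℂ) • ((1 : QM N) + ghzSz N m)
      = diagonal fun v => if v ⟨m - 1, by omega⟩ = v m then 1 else 0 := by
  rw [ghzSz_eq_diagonal m hm, ← diagonal_one, diagonal_add, ← diagonal_smul]
  congr 1
  funext v
  exact half_mul_one_add_sigz_diag_mul _ _

end

/-- At `m = 0` the truncated subtraction makes the condition trivial, so this is the indicator
of the two constant strings. -/
def ghzIndicator (N : ℕ) (v : Fin N → Fin 2) : ℂ :=
  if ∀ m : Fin N, v ⟨m - 1, by omega⟩ = v m then 1 else 0

section

variable {N : ℕ}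

lemma ghzProd_eq_diagonal : ghzProd N = diagonal (ghzIndicator N) := by
  rw [ghzProd, List.map_congr_left (fun m hm => ghzSz_factor_eq_diagonal m (by simpa using hm)),
    list_prod_map_diagonal]
  simp only [list_prod_map_boole, List.mem_filter, List.mem_finRange, true_and,
    decide_eq_true_eq]
  congr
  funext v
  refine if_congr ⟨fun h m => ?_, fun h m _ => h m⟩ rfl rfl
  by_cases hm : m.val = 0
  · rw [show (⟨m - 1, _⟩ : Fin N) = m from Fin.ext (by simp [hm])]
  · exact h m hm

lemma ghzIndicator_add_single {m : Fin N} (hm : m.val ≠ 0) {v : Fin N → Fin 2}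
    (hv : v ⟨m - 1, by omega⟩ = v m) : ghzIndicator N (v + Pi.single m 1) = 0 := by
  have hpred : (⟨m - 1, by omega⟩ : Fin N) ≠ m := by
    simp [Fin.ext_iff]
    omega
  refine if_neg fun h => ?_
  have := h m
  simp only [Pi.add_apply, Pi.single_eq_same, Pi.single_eq_of_ne hpred, add_zero, hv] at this
  exact (show ∀ b : Fin 2, b ≠ b + 1 by decide) _ this

lemma ghzIndicator_zero : ghzIndicator N 0 = 1 := if_pos fun _ => rfl

lemma ghzIndicator_one : ghzIndicator N 1 = 1 := if_pos fun _ => rfl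

/-- `P + σ_x^{(m)} P σ_x^{(m)}` for the GHZ projector `P = ghzProd N`. -/
def ghzProjAddFlip (N : ℕ) (m : Fin N) : QM N :=
  diagonal fun v => ghzIndicator N v + ghzIndicator N (v + Pi.single m 1)

/-- `P - σ_x^{(m)} P σ_x^{(m)}` for the GHZ projector `P = ghzProd N`. -/
def ghzProjSubFlip (N : ℕ) (m : Fin N) : QM N :=
  diagonal fun v => ghzIndicator N v - ghzIndicator N (v + Pi.single m 1)

lemma phiMap_ghzProjAddFlip (m : Fin N) (lam : ℝ) :
    phiMap N m lam (ghzProjAddFlip N m) = ghzProjAddFlip N m :=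
  phiMap_diagonal_of_flip_invariant m lam _ fun v => by rw [fin_two_pi_add_add_self, add_comm]

lemma phiMap_ghzProjSubFlip (m : Fin N) (lam : ℝ) :
    phiMap N m lam (ghzProjSubFlip N m)
      = (((1 + √(1 - lam ^ 2)) / 2 : ℝ) : ℂ) • ghzProjSubFlip N m :=
  phiMap_diagonal_of_flip_antiinvariant m lam _ fun v => by rw [fin_two_pi_add_add_self, neg_sub]

lemma ghzWitnessMod_eq (m : Fin N) (lam : ℝ) :
    ghzWitnessMod N lam
      = (2 : ℂ) • 1 - (lam : ℂ) • ghzS1 N - ghzProjAddFlip N m - ghzProjSubFlip N m := by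
  rw [ghzWitnessMod, ghzProd_eq_diagonal, ghzProjAddFlip, ghzProjSubFlip]
  ext v w
  by_cases h : v = w <;> simp [h, one_apply]
  ring

lemma allZero_eq_single : allZero N = Pi.single 0 1 := by
  funext v
  simp [allZero, Pi.single_apply, funext_iff]

lemma allOne_eq_single : allOne N = Pi.single 1 1 := by
  funext v
  simp [allOne, Pi.single_apply, funext_iff]

lemma genGhzVec_eq (hN : 0 < N) (α : ℝ) :
    genGhzVec N α = ((√α : ℝ) : ℂ) • allZero N + ((√(1 - α) : ℝ) : ℂ) • allOne N := by
  funext v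
  simp only [genGhzVec, allZero, allOne, Pi.add_apply, Pi.smul_apply, smul_eq_mul]
  split_ifs with h0 h1 h1 <;> try simp
  exact absurd ((h0 ⟨0, hN⟩).symm.trans (h1 ⟨0, hN⟩)) (by decide)

lemma trace_mul_outer_single (A : QM N) (v : Fin N → Fin 2) :
    (A * outer N (Pi.single v 1)).trace = A v v := by
  simp [outer, mul_vecMulVec]

lemma trace_mul_outer_smul_single_add (A : QM N) (a b : ℝ) (v w : Fin N → Fin 2) :
    (A * outer N ((a : ℂ) • Pi.single v 1 + (b : ℂ) • Pi.single w 1)).trace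
      = a ^ 2 * A v v + a * b * (A v w + A w v) + b ^ 2 * A w w := by
  simp [outer, mul_vecMulVec, mulVec_add, mulVec_smul, dotProduct_add]
  ring

lemma trace_mul_mixedState (hN : 0 < N) (A : QM N) {α : ℝ} (hα₀ : 0 ≤ α) (hα₁ : α ≤ 1)
    (p₁ p₂ p₃ : ℝ) :
    (A * mixedState N α p₁ p₂ p₃).trace = p₁ * (α * A 0 0 + √(α * (1 - α)) * (A 0 1 + A 1 0)
      + (1 - α) * A 1 1) + p₂ * A 0 0 + p₃ * A 1 1 := by
  rw [mixedState, genGhzVec_eq hN, allZero_eq_single, allOne_eq_single]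
  simp only [Matrix.mul_add, Matrix.mul_smul, trace_add, trace_smul, trace_mul_outer_single,
    trace_mul_outer_smul_single_add, smul_eq_mul]
  rw [← Complex.ofReal_pow, ← Complex.ofReal_pow, ← Complex.ofReal_mul, Real.sq_sqrt hα₀,
    Real.sq_sqrt (sub_nonneg.2 hα₁), ← Real.sqrt_mul hα₀]
  push_cast
  ring

lemma trace_diagonal_mul_mixedState (hN : 0 < N) {f : (Fin N → Fin 2) → ℂ} (hf₀ : f 0 = 1)
    (hf₁ : f 1 = 1) {α : ℝ} (hα₀ : 0 ≤ α) (hα₁ : α ≤ 1) {p₁ p₂ p₃ : ℝ}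
    (hsum : p₁ + p₂ + p₃ = 1) : (diagonal f * mixedState N α p₁ p₂ p₃).trace = 1 := by
  rw [trace_mul_mixedState hN _ hα₀ hα₁, diagonal_apply_ne _ (fin_two_pi_zero_ne_one hN),
    diagonal_apply_ne _ (fin_two_pi_zero_ne_one hN).symm, diagonal_apply_eq, diagonal_apply_eq,
    hf₀, hf₁]
  have hsum' : (p₁ + p₂ + p₃ : ℂ) = 1 := by exact_mod_cast hsum
  linear_combination hsum'

lemma trace_ghzS1_mul_mixedState (hN : 0 < N) {α : ℝ} (hα₀ : 0 ≤ α) (hα₁ : α ≤ 1)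
    (p₁ p₂ p₃ : ℝ) :
    (ghzS1 N * mixedState N α p₁ p₂ p₃).trace = ((2 * p₁ * √(α * (1 - α)) : ℝ) : ℂ) := by
  have h01 := fin_two_pi_zero_ne_one hN
  rw [trace_mul_mixedState hN _ hα₀ hα₁]
  simp [ghzS1_eq_shiftMatrix, shiftMatrix, h01, h01.symm, fin_two_pi_add_self]
  ring

lemma trace_ghzProj_mul_mixedState (hN : 0 < N) {m : Fin N} (hm : m.val ≠ 0) {α : ℝ}
    (hα₀ : 0 ≤ α) (hα₁ : α ≤ 1) {p₁ p₂ p₃ : ℝ} (hsum : p₁ + p₂ + p₃ = 1) :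
    (ghzProjAddFlip N m * mixedState N α p₁ p₂ p₃).trace = 1 ∧
      (ghzProjSubFlip N m * mixedState N α p₁ p₂ p₃).trace = 1 := by
  have h₀ : ghzIndicator N (Pi.single m 1) = 0 := by
    simpa using ghzIndicator_add_single (v := 0) hm rfl
  have h₁ : ghzIndicator N (1 + Pi.single m 1) = 0 := ghzIndicator_add_single hm rfl
  constructor <;>
  exact trace_diagonal_mul_mixedState hN (by simp [h₀, ghzIndicator_zero])
    (by simp [h₁, ghzIndicator_one]) hα₀ hα₁ hsum

end

lemma sub_mul_div_neg_iff {a c t x : ℝ} (hc : 0 < c) (ht : 0 < t) :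
    a - c * x / t < 0 ↔ x > t / c * a := by
  rw [gt_iff_lt, div_mul_eq_mul_div, div_lt_iff₀ hc, sub_neg, lt_div_iff₀ ht]
  constructor <;> intro h <;> linarith

theorem mixedState_sequential_witness_trace
    (N : ℕ) (hN : 3 ≤ N) (α : ℝ) (hα : α ∈ Set.Ioo (0 : ℝ) 1)
    (p₁ p₂ p₃ : ℝ) (hp₁ : 0 < p₁)
    (hsum : p₁ + p₂ + p₃ = 1)
    (lam : ℕ → ℝ)
    (ρ : ℕ → QM N)
    (hinit : ρ 1 = mixedState N α p₁ p₂ p₃)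
    (hrec : ∀ k, 1 ≤ k → ρ (k + 1) = phiMap N ⟨N - 1, by omega⟩ (lam k) (ρ k)) :
    ∀ k, 1 ≤ k →
      (ghzWitnessMod N (lam k) * ρ k).trace
        = ((1 - ∏ j ∈ Finset.Icc 1 (k - 1), (1 + Real.sqrt (1 - lam j ^ 2)) / 2
            - 2 * p₁ * Real.sqrt (α * (1 - α)) * lam k / 2 ^ (k - 1) : ℝ) : ℂ) ∧
      (((ghzWitnessMod N (lam k) * ρ k).trace).re < 0 ↔
        lam k > (2 : ℝ) ^ (k - 1) / (2 * p₁ * Real.sqrt (α * (1 - α)))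
          * (1 - ∏ j ∈ Finset.Icc 1 (k - 1), (1 + Real.sqrt (1 - lam j ^ 2)) / 2)) := by
  intro k hk
  obtain ⟨hα₀, hα₁⟩ := hα
  have hN₀ : 0 < N := by omega
  set m : Fin N := ⟨N - 1, by omega⟩
  have hm : m.val ≠ 0 := by simp only [m]; omega
  have iterate := trace_mul_eq_prod_of_phiMap_eq_smul m lam ρ hrec
  have hOne := iterate 1 (fun _ => 1) (fun j => by rw [one_smul, phiMap_one]) k hk
  have hS1 := iterate _ _ (fun j => phiMap_ghzS1 m (lam j)) k hk
  have hAdd := iterate _ (fun _ => 1) (fun j => by rw [one_smul, phiMap_ghzProjAddFlip]) k hk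
  have hSub := iterate _ _ (fun j => phiMap_ghzProjSubFlip m (lam j)) k hk
  obtain ⟨hAdd₁, hSub₁⟩ := trace_ghzProj_mul_mixedState hN₀ hm hα₀.le hα₁.le hsum
  have htrace : (ghzWitnessMod N (lam k) * ρ k).trace
      = ((1 - ∏ j ∈ Finset.Icc 1 (k - 1), (1 + √(1 - lam j ^ 2)) / 2
          - 2 * p₁ * √(α * (1 - α)) * lam k / 2 ^ (k - 1) : ℝ) : ℂ) := by
    rw [ghzWitnessMod_eq m, sub_mul, sub_mul, sub_mul, trace_sub, trace_sub, trace_sub,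
      smul_mul, smul_mul, trace_smul, trace_smul, hOne, hS1, hAdd, hSub, hinit, hAdd₁, hSub₁,
      trace_ghzS1_mul_mixedState hN₀ hα₀.le hα₁.le, ← diagonal_one,
      trace_diagonal_mul_mixedState hN₀ rfl rfl hα₀.le hα₁.le hsum]
    simp only [Finset.prod_const, Nat.card_Icc, Nat.add_sub_cancel, smul_eq_mul, one_div, inv_pow]
    push_cast
    ring
  refine ⟨htrace, ?_⟩
  rw [htrace, Complex.ofReal_re]
  have hsqrt : 0 < √(α * (1 - α)) := Real.sqrt_pos.2 (mul_pos hα₀ (sub_pos.2 hα₁))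
  exact sub_mul_div_neg_iff (by positivity) (by positivity)
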